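/- Let W_{N+1}(ε), …, W_1(ε) be the Kleinrock accumulating-priority expected waiting times defined by the downward recursion, and define the expected queue lengths Q_i(ε) = λ_i(ε) · W_i(ε). Then for every class i ∈ {1, …, N+1}, lim_{ε ↓ 0} ε · Q_i(ε) = (λ_i/b_i) / (Σ_{k=1}^{N+1} λ_k/b_k). -/

import Mathlib

open Filter Topology Finset

/-!
The scaled waiting times `V i = ε * W i` satisfy the recursion
`V i = (1 - ε - ∑_{k > i} λ_k (1 - b_k / b_i) V k) / D_i(λ)`, whose coefficients converge as
`ε ↓ 0` and whose limiting denominator `D_i(λ)` is positive. By downward induction on `i`,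
`V i` converges to the solution `c` of the limiting recursion, which is `c i = 1 / (b_i S)` with
`S = ∑_k λ_k / b_k`: since `λ_k (1 - b_k / b_i) c k = -λ_k (1 - b_i / b_k) / (b_i S)`, the
fixed-point equation reduces to `1 - ∑_k λ_k (1 - b_i / b_k) = b_i S`, which holds
because `∑_k λ_k = 1`. Finally `ε Q_i = λ_i(ε) V i → λ_i c i`.
-/

theorem Finset.sum_Iic_add_sum_Ioi {ι M : Type*} [LinearOrder ι] [Fintype ι]
    [LocallyFiniteOrderBot ι] [LocallyFiniteOrderTop ι] [AddCommMonoid M] (i : ι) (f : ι → M) :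
    ∑ k ∈ Iic i, f k + ∑ k ∈ Ioi i, f k = ∑ k, f k := by
  rw [← filter_ge_eq_Iic, ← filter_lt_eq_Ioi]
  simp_rw [← not_le]
  exact sum_filter_add_sum_filter_not univ (· ≤ i) f

theorem Finset.sum_mul_one_sub_div {ι : Type*} (s : Finset ι) (lam b : ι → ℝ) (c : ℝ)
    (hb : ∀ k ∈ s, b k ≠ 0) :
    ∑ k ∈ s, lam k * (1 - c / b k) = ∑ k ∈ s, lam k - c * ∑ k ∈ s, lam k / b k := by
  rw [mul_sum, ← sum_sub_distrib]
  refine sum_congr rfl fun k hk => ?_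
  field_simp [hb k hk]

namespace Kleinrock

noncomputable def denom {ι : Type*} [Preorder ι] [LocallyFiniteOrderBot ι] (lam b : ι → ℝ)
    (i : ι) : ℝ :=
  1 - ∑ k ∈ Iic i, lam k * (1 - b i / b k)

noncomputable def heavyTrafficLimit {ι : Type*} [Fintype ι] (lam b : ι → ℝ) (i : ι) : ℝ :=
  1 / (b i * ∑ k, lam k / b k)

theorem mul_eq_of_eq_div_denom {ι : Type*} [Preorder ι] [LocallyFiniteOrderBot ι]
    [LocallyFiniteOrderTop ι] {ε : ℝ} (hε : ε ≠ 0) {lam b W : ι → ℝ} {i : ι}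
    (hW : W i = (1 / ε - 1 - ∑ k ∈ Ioi i, lam k * (1 - b k / b i) * W k) / denom lam b i) :
    ε * W i = (1 - ε - ∑ k ∈ Ioi i, lam k * (1 - b k / b i) * (ε * W k)) / denom lam b i := by
  rw [hW, mul_div_assoc', mul_sub, mul_sub, mul_one_div_cancel hε, mul_one, mul_sum]
  congr 3 with k
  ring

variable {ι : Type*} [LinearOrder ι] [Fintype ι] [LocallyFiniteOrderBot ι]

theorem denom_pos {lam b : ι → ℝ} (hb : ∀ k, 0 < b k) (hlam : ∀ k, 0 < lam k)
    (hsum : ∑ k, lam k = 1) (i : ι) : 0 < denom lam b i := by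
  have hle : ∑ k ∈ Iic i, lam k ≤ 1 :=
    hsum ▸ sum_le_sum_of_subset_of_nonneg (subset_univ _) fun k _ _ => (hlam k).le
  have hpos : 0 < ∑ k ∈ Iic i, lam k / b k :=
    sum_pos (fun k _ => div_pos (hlam k) (hb k)) ⟨i, mem_Iic.mpr le_rfl⟩
  rw [denom, sum_mul_one_sub_div _ _ _ _ fun k _ => (hb k).ne']
  nlinarith [hb i]

variable [LocallyFiniteOrderTop ι]

theorem heavyTrafficLimit_mul_denom {lam b : ι → ℝ} (hb : ∀ k, b k ≠ 0)
    (hS : ∑ k, lam k / b k ≠ 0) (hsum : ∑ k, lam k = 1) (i : ι) :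
    heavyTrafficLimit lam b i * denom lam b i =
      1 - ∑ k ∈ Ioi i, lam k * (1 - b k / b i) * heavyTrafficLimit lam b k := by
  unfold heavyTrafficLimit denom
  set S := ∑ k, lam k / b k
  have hterm : ∀ k, lam k * (1 - b k / b i) * (1 / (b k * S)) =
      -(lam k * (1 - b i / b k)) / (b i * S) := fun k => by
    field_simp [hb i, hb k]
    ring
  have htotal : 1 - ∑ k, lam k * (1 - b i / b k) = b i * S := by
    rw [sum_mul_one_sub_div _ _ _ _ fun k _ => hb k, hsum]
    ring
  rw [← sum_Iic_add_sum_Ioi i] at htotal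
  simp_rw [hterm, ← sum_div, sum_neg_distrib]
  field_simp [hb i]
  linarith

theorem tendsto_heavyTrafficLimit {l : Filter ℝ} (hl : l ≤ 𝓝 0) {lam : ℝ → ι → ℝ}
    {lamLim b : ι → ℝ} (hb : ∀ k, 0 < b k) (hlamLim : ∀ k, 0 < lamLim k)
    (hsum : ∑ k, lamLim k = 1) (hlam : ∀ k, Tendsto (lam · k) l (𝓝 (lamLim k)))
    {V : ℝ → ι → ℝ} (hV : ∀ᶠ ε in l, ∀ i,
      V ε i = (1 - ε - ∑ k ∈ Ioi i, lam ε k * (1 - b k / b i) * V ε k) / denom (lam ε) b i)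
    (i : ι) : Tendsto (V · i) l (𝓝 (heavyTrafficLimit lamLim b i)) := by
  induction i using WellFoundedGT.induction with
  | _ i ih =>
  have hD0 := denom_pos hb hlamLim hsum i
  have hD : Tendsto (fun ε => denom (lam ε) b i) l (𝓝 (denom lamLim b i)) :=
    tendsto_const_nhds.sub (tendsto_finsetSum _ fun k _ => (hlam k).mul tendsto_const_nhds)
  have hnum : Tendsto (fun ε => 1 - ε - ∑ k ∈ Ioi i, lam ε k * (1 - b k / b i) * V ε k) l
      (𝓝 (1 - 0 - ∑ k ∈ Ioi i, lamLim k * (1 - b k / b i) * heavyTrafficLimit lamLim b k)) :=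
    (tendsto_const_nhds.sub (tendsto_id.mono_right hl)).sub <| tendsto_finsetSum _ fun k hk =>
      ((hlam k).mul tendsto_const_nhds).mul (ih k (mem_Ioi.mp hk))
  have hS : 0 < ∑ k, lamLim k / b k :=
    sum_pos (fun k _ => div_pos (hlamLim k) (hb k)) ⟨i, mem_univ i⟩
  rw [sub_zero, ← heavyTrafficLimit_mul_denom (fun k => (hb k).ne') hS.ne' hsum] at hnum
  have hquot := hnum.div hD hD0.ne'
  rw [mul_div_cancel_right₀ _ hD0.ne'] at hquot
  refine hquot.congr' ?_
  filter_upwards [hV] with ε hε using (hε i).symm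

end Kleinrock

open Kleinrock in
theorem accumulating_priority_heavy_traffic_queue_length_general
    (N : ℕ) (b : Fin (N + 1) → ℝ)
    (hb_pos : ∀ i, 0 < b i)
    (lam : ℝ → Fin (N + 1) → ℝ) (lamLim : Fin (N + 1) → ℝ)
    (hlamLim_pos : ∀ i, 0 < lamLim i)
    (hlamLim_sum : ∑ i, lamLim i = 1)
    (hlam_tendsto : ∀ i, Tendsto (fun ε => lam ε i) (𝓝[>] (0 : ℝ)) (𝓝 (lamLim i)))
    (W : ℝ → Fin (N + 1) → ℝ)
    (hW : ∀ ε ∈ Set.Ioo (0 : ℝ) 1, ∀ i,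
      W ε i = (1 / ε - 1 - ∑ k ∈ Finset.Ioi i, lam ε k * (1 - b k / b i) * W ε k) /
        (1 - ∑ k ∈ Finset.Iic i, lam ε k * (1 - b i / b k))) :
    ∀ i, Tendsto (fun ε => ε * (lam ε i * W ε i)) (𝓝[>] (0 : ℝ))
      (𝓝 ((lamLim i / b i) / ∑ k, lamLim k / b k)) := by
  have hscaled := tendsto_heavyTrafficLimit nhdsWithin_le_nhds hb_pos hlamLim_pos hlamLim_sum
    hlam_tendsto (V := fun ε i => ε * W ε i) <| by
      filter_upwards [Ioo_mem_nhdsGT one_pos] with ε hε i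
      exact mul_eq_of_eq_div_denom hε.1.ne' (hW ε hε i)
  intro i
  have hlim : lamLim i * heavyTrafficLimit lamLim b i = lamLim i / b i / ∑ k, lamLim k / b k := by
    rw [heavyTrafficLimit]
    ring
  rw [← hlim]
  exact ((hlam_tendsto i).mul (hscaled i)).congr fun ε => by ring

/-- **Heavy-traffic limit for the expected queue lengths in the Kleinrock
accumulating-priority queue.**  With `W ε` defined by the Kleinrock downward recursion and
`Q ε i = lam ε i * W ε i`, for every class `i`,
`ε * Q ε i → (lamLim i / b i) / (∑ k, lamLim k / b k)` as `ε ↓ 0`. -/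
theorem accumulating_priority_heavy_traffic_queue_length
    (N : ℕ) (b : Fin (N + 1) → ℝ)
    (hb_pos : ∀ i, 0 < b i) (hb_anti : StrictAnti b)
    (lam : ℝ → Fin (N + 1) → ℝ) (lamLim : Fin (N + 1) → ℝ)
    (hlam_pos : ∀ ε ∈ Set.Ioo (0 : ℝ) 1, ∀ i, 0 < lam ε i)
    (hlam_sum : ∀ ε ∈ Set.Ioo (0 : ℝ) 1, ∑ i, lam ε i = 1 - ε)
    (hlamLim_pos : ∀ i, 0 < lamLim i)
    (hlamLim_sum : ∑ i, lamLim i = 1)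
    (hlam_tendsto : ∀ i, Tendsto (fun ε => lam ε i) (𝓝[>] (0 : ℝ)) (𝓝 (lamLim i)))
    (W : ℝ → Fin (N + 1) → ℝ)
    (hW : ∀ ε ∈ Set.Ioo (0 : ℝ) 1, ∀ i,
      W ε i = (1 / ε - 1 - ∑ k ∈ Finset.Ioi i, lam ε k * (1 - b k / b i) * W ε k) /
        (1 - ∑ k ∈ Finset.Iic i, lam ε k * (1 - b i / b k))) :
    ∀ i, Tendsto (fun ε => ε * (lam ε i * W ε i)) (𝓝[>] (0 : ℝ))
      (𝓝 ((lamLim i / b i) / ∑ k, lamLim k / b k)) :=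
  accumulating_priority_heavy_traffic_queue_length_general N b hb_pos lam lamLim hlamLim_pos
    hlamLim_sum hlam_tendsto W hW
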